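/- (Invariance of the lift Λ, well-definedness on the quotient, Lemma 3.) The lift Λ is invariant under the action α: for every S ∈ SE_{e₃}(3), every state (P, v, pᵢ) with (P T_C)⁻¹(pᵢ) ≠ 0 for all i, and inputs Ω, a ∈ ℝ³, the components of Λ evaluated at α(S, (P, v, pᵢ)) agree with those at (P, v, pᵢ): the SE(3) component U(Ω, v) is unchanged, the bias component satisfies −a + g (R_Sᵀ R_P)ᵀ e₃ = −a + g R_Pᵀ e₃, and the camera-frame landmark coordinates satisfy ((S⁻¹P) T_C)⁻¹(S⁻¹(pᵢ)) = (P T_C)⁻¹(pᵢ), so that the SOT(3) components (Ω_C + (qᵢ × v_C)/‖qᵢ‖², (qᵢᵀ v_C)/‖qᵢ‖²) are unchanged. -/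

import Mathlib

open scoped InnerProductSpace Matrix

noncomputable section

/-- Vectors in ℝ³ with the Euclidean norm. -/
abbrev V3 := EuclideanSpace ℝ (Fin 3)

abbrev Mat3 := Matrix (Fin 3) (Fin 3) ℝ

/-- `R ∈ SO(3)` iff `RᵀR = I` and `det R = 1`. -/
def SO3 (R : Mat3) : Prop := R.transpose * R = 1 ∧ R.det = 1

/-- Matrix-vector multiplication. -/
def mv (M : Mat3) (q : V3) : V3 := WithLp.toLp 2 (M.mulVec q)

/-- The standard gravity direction `e₃ = (0,0,1)`. -/
def e3 : V3 := WithLp.toLp 2 ![0, 0, 1]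

/-- Elements of SE(3) are pairs `(R, x)`. -/
abbrev SE3 := Mat3 × V3

/-- SE(3) group product: `(R₁,x₁)·(R₂,x₂) = (R₁R₂, x₁ + R₁x₂)`. -/
def seMul (P Q : SE3) : SE3 := (P.1 * Q.1, P.2 + mv P.1 Q.2)

/-- SE(3) identity `(I, 0)`. -/
def seId : SE3 := (1, 0)

/-- SE(3) inverse: `P⁻¹ = (Rᵀ, −Rᵀx)`. -/
def seInv (P : SE3) : SE3 := (P.1ᵀ, -(mv P.1ᵀ P.2))

/-- Action of SE(3) on ℝ³: `P(q) = R_P q + x_P`. -/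
def seAct (P : SE3) (q : V3) : V3 := mv P.1 q + P.2

/-- The subgroup `SE_{e₃}(3) = {(R,x) ∈ SE(3) : R e₃ = e₃}`. -/
def SEe3 : Set SE3 := {S | SO3 S.1 ∧ mv S.1 e3 = e3}

/-- The skew-symmetric matrix `Ω^×` with `Ω^× y = Ω × y`. -/
def skew (Ω : V3) : Mat3 := !![0, -Ω 2, Ω 1; Ω 2, 0, -Ω 0; -Ω 1, Ω 0, 0]

/-- The cross product on ℝ³. -/
def cross3 (a b : V3) : V3 := WithLp.toLp 2 (crossProduct a b)

/-- The change-of-reference-frame action `α(S, (P, v, pᵢ)) = (S⁻¹P, v, S⁻¹(pᵢ))`. -/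
def alpha (n : ℕ) (S : SE3) (ξ : SE3 × V3 × (Fin n → V3)) : SE3 × V3 × (Fin n → V3) :=
  (seMul (seInv S) ξ.1, ξ.2.1, fun i => seAct (seInv S) (ξ.2.2 i))

/-- The equivariant lift `Λ((P, v, pᵢ), (Ω, a))`, valued in
`se(3) × ℝ³ × (so(3) × ℝ)ⁿ ≅ 𝔤`: the `se(3)` component is `U(Ω, v) = (Ω^×, v)`, the
bias component is `−a + g R_Pᵀ e₃`, and the `i`-th `sot(3)` component is
`((Ω_C + (qᵢ × v_C)/‖qᵢ‖²)^×, (qᵢᵀ v_C)/‖qᵢ‖²)` with `qᵢ = (P T_C)⁻¹(pᵢ)`. -/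
def Lam (n : ℕ) (TC : SE3) (g : ℝ) (ξ : SE3 × V3 × (Fin n → V3)) (Ω a : V3) :
    (Mat3 × V3) × V3 × (Fin n → Mat3 × ℝ) :=
  ((skew Ω, ξ.2.1),
   -a + g • mv ξ.1.1ᵀ e3,
   fun i =>
     let q : V3 := seAct (seInv (seMul ξ.1 TC)) (ξ.2.2 i)
     let ΩC : V3 := mv TC.1ᵀ Ω
     let vC : V3 := mv TC.1ᵀ (ξ.2.1 - cross3 TC.2 Ω)
     (skew (ΩC + (‖q‖ ^ 2)⁻¹ • cross3 q vC), ⟪q, vC⟫_ℝ / ‖q‖ ^ 2))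

/-! Changing the reference frame by `S` moves the pose to `S⁻¹P` and the landmarks to `S⁻¹(pᵢ)`,
so the camera-frame coordinates `(S⁻¹P T_C)⁻¹(S⁻¹(pᵢ)) = (P T_C)⁻¹(pᵢ)` do not see `S`; the gravity
term `(R_SᵀR_P)ᵀe₃ = R_PᵀR_S e₃` does not either, because `R_S` fixes `e₃`. Every component of `Λ`
is built from these quantities, `v`, `Ω` and `T_C`. -/

lemma mv_mul (A B : Mat3) (q : V3) : mv (A * B) q = mv A (mv B q) := by
  simp [mv, Matrix.mulVec_mulVec]

lemma mv_add (A : Mat3) (p q : V3) : mv A (p + q) = mv A p + mv A q := by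
  simp [mv, Matrix.mulVec_add]

lemma mv_one (q : V3) : mv 1 q = q := by
  simp [mv]

lemma seMul_assoc (P Q T : SE3) : seMul (seMul P Q) T = seMul P (seMul Q T) := by
  simp [seMul, Matrix.mul_assoc, mv_add, mv_mul, add_assoc]

lemma seAct_seInv_seMul {P : SE3} (hP : P.1ᵀ * P.1 = 1) (Q : SE3) (p : V3) :
    seAct (seInv (seMul P Q)) (seAct P p) = seAct (seInv Q) p := by
  simp only [seAct, seInv, seMul, Matrix.transpose_mul, mv_add, mv_mul, ← mv_mul P.1ᵀ, hP,
    mv_one]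
  abel

lemma seAct_seInv_seMul_seInv {S : SE3} (hS : S.1ᵀ * S.1 = 1) (P T : SE3) (p : V3) :
    seAct (seInv (seMul (seMul (seInv S) P) T)) (seAct (seInv S) p)
      = seAct (seInv (seMul P T)) p := by
  rw [seMul_assoc]
  exact seAct_seInv_seMul (by simpa [seInv] using mul_eq_one_comm.mp hS) _ _

lemma mv_transpose_seMul_seInv_e3 {S : SE3} (hS : mv S.1 e3 = e3) (P : SE3) :
    mv (seMul (seInv S) P).1ᵀ e3 = mv P.1ᵀ e3 := by
  simp [seMul, seInv, Matrix.transpose_mul, mv_mul, hS]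

theorem Lambda_invariant_general (n : ℕ) (TC : SE3) (g : ℝ)
    (S : SE3) (hS : S ∈ SEe3)
    (ξ : SE3 × V3 × (Fin n → V3))
    (Ω a : V3) :
    (-a + g • mv ((seMul (seInv S) ξ.1).1)ᵀ e3 = -a + g • mv ξ.1.1ᵀ e3) ∧
    (∀ i, seAct (seInv (seMul (seMul (seInv S) ξ.1) TC)) (seAct (seInv S) (ξ.2.2 i))
        = seAct (seInv (seMul ξ.1 TC)) (ξ.2.2 i)) ∧
    Lam n TC g (alpha n S ξ) Ω a = Lam n TC g ξ Ω a := by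
  obtain ⟨⟨hS_orth, -⟩, hS_e3⟩ := hS
  have h_bias := mv_transpose_seMul_seInv_e3 hS_e3 ξ.1
  have h_landmark := fun i => seAct_seInv_seMul_seInv hS_orth ξ.1 TC (ξ.2.2 i)
  refine ⟨by rw [h_bias], h_landmark, ?_⟩
  simp only [Lam, alpha, h_bias, h_landmark]

/-- (Invariance of the lift `Λ`, Lemma 3.) `Λ` is invariant under the
action `α`: the bias component satisfies `−a + g(R_SᵀR_P)ᵀe₃ = −a + gR_Pᵀe₃`, the
camera-frame landmark coordinates satisfy `((S⁻¹P)T_C)⁻¹(S⁻¹(pᵢ)) = (P T_C)⁻¹(pᵢ)`,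
and hence `Λ(α(S, ξ), (Ω, a)) = Λ(ξ, (Ω, a))`. -/
theorem Lambda_invariant (n : ℕ) (hn : 1 ≤ n) (TC : SE3) (hTC : SO3 TC.1) (g : ℝ)
    (S : SE3) (hS : S ∈ SEe3)
    (ξ : SE3 × V3 × (Fin n → V3)) (hP : SO3 ξ.1.1)
    (hq : ∀ i, seAct (seInv (seMul ξ.1 TC)) (ξ.2.2 i) ≠ 0)
    (Ω a : V3) :
    (-a + g • mv ((seMul (seInv S) ξ.1).1)ᵀ e3 = -a + g • mv ξ.1.1ᵀ e3) ∧
    (∀ i, seAct (seInv (seMul (seMul (seInv S) ξ.1) TC)) (seAct (seInv S) (ξ.2.2 i))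
        = seAct (seInv (seMul ξ.1 TC)) (ξ.2.2 i)) ∧
    Lam n TC g (alpha n S ξ) Ω a = Lam n TC g ξ Ω a :=
  Lambda_invariant_general n TC g S hS ξ Ω a
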